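/- arXiv:2604.22734 — 2 statements merged into one kernel-verified Lean document; each statement's English description precedes it below -/
import Mathlib

section
/- Fix a spin weight s∈ℤ, an integer ℓ≥|s|, and σ∈ℂ. Let Ψ̂:(1,∞)→ℂ be twice differentiable and define Θ̂(ρ) = (ρ(ρ−1))^{−s/2} Ψ̂(ρ) (real positive power, since ρ(ρ−1)>0 for ρ>1). Then Ψ̂ satisfies the frequency-domain Bardeen–Press equation −∂_{ρ_*}²Ψ̂ + (2s(ρ−1/2)/ρ²)∂_{ρ_*}Ψ̂ + (2sσ(ρ−3/2)/ρ²)Ψ̂ + V(ρ)Ψ̂ + σ²Ψ̂ = 0 on (1,∞) if and only if Θ̂ satisfies the Schrödinger-form equation −∂_{ρ_*}²Θ̂ + (σ² + U(ρ))Θ̂ = 0 on (1,∞), where U(ρ) = 2sσ(ρ−3/2)/ρ² + (s²(ρ−1/2)² + s(ρ−1)²)/ρ⁴ + V(ρ). -/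
/-!
With `w = (ρ(ρ−1))^{−s/2}` one has `∂_{ρ_*} w = g w` for `g = −s(ρ−1/2)/ρ²`, so conjugation by `w`
gives `∂_{ρ_*}²(wΨ) = w (∂_{ρ_*}²Ψ + 2g ∂_{ρ_*}Ψ + (g² + ∂_{ρ_*}g) Ψ)`. Since
`g² + ∂_{ρ_*}g = (s²(ρ−1/2)² + s(ρ−1)²)/ρ⁴` is exactly what `U` adds to `V`, the Schrödinger operator
applied to `Θ̂ = wΨ̂` is `w` times the Bardeen–Press operator applied to `Ψ̂`, and `w > 0`.
-/

noncomputable section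

/-- The Bardeen–Press potential
`V(ρ) = (1−1/ρ)[(s+1)/ρ³ + (ℓ−s)(ℓ+s+1)/ρ²]`. -/
def Vpot (s ℓ : ℤ) (ρ : ℝ) : ℂ :=
  (1 - 1/(ρ:ℂ)) * (((s:ℂ)+1)/(ρ:ℂ)^3 + ((ℓ:ℂ)-(s:ℂ))*((ℓ:ℂ)+(s:ℂ)+1)/(ρ:ℂ)^2)

/-- The tortoise-coordinate derivative `∂_{ρ_*} = ((ρ−1)/ρ)∂_ρ` acting on
functions of `ρ`. -/
def Dstar (F : ℝ → ℂ) (ρ : ℝ) : ℂ := (((ρ:ℂ) - 1)/(ρ:ℂ)) * deriv F ρ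

/-- The Schrödinger potential
`U(ρ) = 2sσ(ρ−3/2)/ρ² + (s²(ρ−1/2)² + s(ρ−1)²)/ρ⁴ + V(ρ)`. -/
def Upot (s ℓ : ℤ) (σ : ℂ) (ρ : ℝ) : ℂ :=
  2*(s:ℂ)*σ*((ρ:ℂ) - 3/2)/(ρ:ℂ)^2 +
    ((s:ℂ)^2*((ρ:ℂ) - 1/2)^2 + (s:ℂ)*((ρ:ℂ) - 1)^2)/(ρ:ℂ)^4 + Vpot s ℓ ρ

/-- The transformed field `Θ̂(ρ) = (ρ(ρ−1))^{−s/2} Ψ̂(ρ)` (real positive power). -/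
def Theta (s : ℤ) (Ψ : ℝ → ℂ) (ρ : ℝ) : ℂ :=
  (((ρ*(ρ-1)) ^ (-(s:ℝ)/2) : ℝ) : ℂ) * Ψ ρ

open Topology

lemma Dstar_mul {F G : ℝ → ℂ} {ρ : ℝ} (hF : DifferentiableAt ℝ F ρ)
    (hG : DifferentiableAt ℝ G ρ) :
    Dstar (F * G) ρ = Dstar F ρ * G ρ + F ρ * Dstar G ρ := by
  simp only [Dstar, deriv_mul hF hG]
  ring

lemma Dstar_add {F G : ℝ → ℂ} {ρ : ℝ} (hF : DifferentiableAt ℝ F ρ)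
    (hG : DifferentiableAt ℝ G ρ) :
    Dstar (F + G) ρ = Dstar F ρ + Dstar G ρ := by
  simp only [Dstar, deriv_add hF hG]
  ring

lemma Dstar_congr {F G : ℝ → ℂ} {ρ : ℝ} (h : F =ᶠ[𝓝 ρ] G) : Dstar F ρ = Dstar G ρ := by
  rw [Dstar, Dstar, h.deriv_eq]

lemma differentiableAt_Dstar {F : ℝ → ℂ} {ρ : ℝ} (hρ : ρ ≠ 0)
    (hF : DifferentiableAt ℝ (deriv F) ρ) : DifferentiableAt ℝ (Dstar F) ρ := by
  have : (ρ:ℂ) ≠ 0 := by exact_mod_cast hρ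
  unfold Dstar
  fun_prop (disch := assumption)

theorem Dstar_Dstar_mul_of_Dstar_eq_mul {U : Set ℝ} (hU : IsOpen U) {w g F : ℝ → ℂ}
    (hw : ∀ x ∈ U, DifferentiableAt ℝ w x) (hwg : ∀ x ∈ U, Dstar w x = g x * w x)
    (hF : ∀ x ∈ U, DifferentiableAt ℝ F x) {ρ : ℝ} (hρ : ρ ∈ U)
    (hg : DifferentiableAt ℝ g ρ) (hDF : DifferentiableAt ℝ (Dstar F) ρ) :
    Dstar (Dstar (w * F)) ρ =
      w ρ * (Dstar (Dstar F) ρ + 2 * g ρ * Dstar F ρ + (g ρ ^ 2 + Dstar g ρ) * F ρ) := by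
  have hDwF : Dstar (w * F) =ᶠ[𝓝 ρ] w * (Dstar F + g * F) := by
    filter_upwards [hU.mem_nhds hρ] with x hx
    simp only [Dstar_mul (hw x hx) (hF x hx), hwg x hx, Pi.mul_apply, Pi.add_apply]
    ring
  have hgF := hg.mul (hF ρ hρ)
  rw [Dstar_congr hDwF, Dstar_mul (hw ρ hρ) (hDF.add hgF), Dstar_add hDF hgF,
    Dstar_mul hg (hF ρ hρ), hwg ρ hρ]
  simp only [Pi.mul_apply, Pi.add_apply]
  ring

def thetaWeight (s : ℤ) (x : ℝ) : ℂ := (((x * (x - 1)) ^ (-(s:ℝ) / 2) : ℝ) : ℂ)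

def gaugeCoeff (s : ℤ) (x : ℝ) : ℂ := -(s:ℂ) * ((x:ℂ) - 1/2) / (x:ℂ) ^ 2

lemma Theta_eq_thetaWeight_mul (s : ℤ) (Ψ : ℝ → ℂ) : Theta s Ψ = thetaWeight s * Ψ := rfl

lemma thetaWeight_ne_zero (s : ℤ) {x : ℝ} (hx : 1 < x) : thetaWeight s x ≠ 0 := by
  have : 0 < x * (x - 1) := by nlinarith
  exact Complex.ofReal_ne_zero.2 (Real.rpow_pos_of_pos this _).ne'

lemma hasDerivAt_thetaWeight (s : ℤ) {x : ℝ} (hx : 1 < x) :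
    HasDerivAt (thetaWeight s)
      (((2 * x - 1) * (-(s:ℝ) / 2) * (x * (x - 1)) ^ (-(s:ℝ) / 2 - 1) : ℝ) : ℂ) x := by
  have hp : HasDerivAt (fun y : ℝ => y * (y - 1)) (2 * x - 1) x := by
    exact ((hasDerivAt_id' x).mul ((hasDerivAt_id' x).sub_const 1)).congr_deriv (by ring)
  have : x * (x - 1) ≠ 0 := by nlinarith
  exact ((hp.rpow_const (Or.inl this)).ofReal_comp :)

lemma Dstar_thetaWeight (s : ℤ) {x : ℝ} (hx : 1 < x) :
    Dstar (thetaWeight s) x = gaugeCoeff s x * thetaWeight s x := by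
  have hc : x * (x - 1) ≠ 0 := by nlinarith
  have hx0 : (x:ℂ) ≠ 0 := by exact_mod_cast (zero_lt_one.trans hx).ne'
  have hx1 : (x:ℂ) - 1 ≠ 0 := sub_ne_zero.2 (by exact_mod_cast hx.ne')
  rw [Dstar, (hasDerivAt_thetaWeight s hx).deriv, thetaWeight, gaugeCoeff, Real.rpow_sub_one hc]
  push_cast
  field_simp

lemma hasDerivAt_gaugeCoeff (s : ℤ) {x : ℝ} (hx : x ≠ 0) :
    HasDerivAt (gaugeCoeff s) ((s:ℂ) * ((x:ℂ) - 1) / (x:ℂ) ^ 3) x := by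
  have hx0 : (x:ℂ) ≠ 0 := by exact_mod_cast hx
  have hz : HasDerivAt (fun y : ℝ => (y:ℂ)) 1 x := (hasDerivAt_id x).ofReal_comp
  refine (((hz.sub_const (1/2)).const_mul (-(s:ℂ))).div (hz.fun_pow 2)
    (pow_ne_zero 2 hx0)).congr_deriv ?_
  field_simp
  ring

lemma Dstar_gaugeCoeff (s : ℤ) {x : ℝ} (hx : x ≠ 0) :
    Dstar (gaugeCoeff s) x = (s:ℂ) * ((x:ℂ) - 1) ^ 2 / (x:ℂ) ^ 4 := by
  have hx0 : (x:ℂ) ≠ 0 := by exact_mod_cast hx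
  rw [Dstar, (hasDerivAt_gaugeCoeff s hx).deriv]
  field_simp

lemma schroedinger_Theta_eq_thetaWeight_mul (s ℓ : ℤ) (σ : ℂ) {Ψ : ℝ → ℂ}
    (hΨ1 : ∀ ρ ∈ Set.Ioi (1:ℝ), DifferentiableAt ℝ Ψ ρ) {ρ : ℝ} (hρ : 1 < ρ)
    (hΨ2 : DifferentiableAt ℝ (deriv Ψ) ρ) :
    -(Dstar (Dstar (Theta s Ψ)) ρ) + (σ^2 + Upot s ℓ σ ρ) * Theta s Ψ ρ =
      thetaWeight s ρ *
        (-(Dstar (Dstar Ψ) ρ) + (2*(s:ℂ)*((ρ:ℂ) - 1/2)/(ρ:ℂ)^2) * Dstar Ψ ρ +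
          (2*(s:ℂ)*σ*((ρ:ℂ) - 3/2)/(ρ:ℂ)^2) * Ψ ρ + Vpot s ℓ ρ * Ψ ρ + σ^2 * Ψ ρ) := by
  have hρ0 : ρ ≠ 0 := (zero_lt_one.trans hρ).ne'
  have hρ0' : (ρ:ℂ) ≠ 0 := by exact_mod_cast hρ0
  rw [Theta_eq_thetaWeight_mul, Dstar_Dstar_mul_of_Dstar_eq_mul isOpen_Ioi
      (fun x hx => (hasDerivAt_thetaWeight s hx).differentiableAt)
      (fun x hx => Dstar_thetaWeight s hx) hΨ1 hρ
      (hasDerivAt_gaugeCoeff s hρ0).differentiableAt (differentiableAt_Dstar hρ0 hΨ2),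
    Dstar_gaugeCoeff s hρ0, Upot, gaugeCoeff, Pi.mul_apply]
  field_simp
  ring

theorem bardeenPress_iff_schroedinger_form_general
    (s ℓ : ℤ) (σ : ℂ) (Ψ : ℝ → ℂ)
    (hΨ1 : ∀ ρ ∈ Set.Ioi (1:ℝ), DifferentiableAt ℝ Ψ ρ)
    (hΨ2 : ∀ ρ ∈ Set.Ioi (1:ℝ), DifferentiableAt ℝ (deriv Ψ) ρ) :
    (∀ ρ ∈ Set.Ioi (1:ℝ),
        -(Dstar (Dstar Ψ) ρ) + (2*(s:ℂ)*((ρ:ℂ) - 1/2)/(ρ:ℂ)^2) * Dstar Ψ ρ +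
          (2*(s:ℂ)*σ*((ρ:ℂ) - 3/2)/(ρ:ℂ)^2) * Ψ ρ + Vpot s ℓ ρ * Ψ ρ +
          σ^2 * Ψ ρ = 0) ↔
      (∀ ρ ∈ Set.Ioi (1:ℝ),
        -(Dstar (Dstar (Theta s Ψ)) ρ) + (σ^2 + Upot s ℓ σ ρ) * Theta s Ψ ρ = 0) := by
  refine forall₂_congr fun ρ hρ => ?_
  rw [schroedinger_Theta_eq_thetaWeight_mul s ℓ σ hΨ1 hρ (hΨ2 ρ hρ), mul_eq_zero,
    or_iff_right (thetaWeight_ne_zero s hρ)]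

/-- `Ψ̂` satisfies the frequency-domain Bardeen–Press equation on `(1,∞)` iff
`Θ̂ = (ρ(ρ−1))^{−s/2}Ψ̂` satisfies the Schrödinger-form equation
`−∂_{ρ_*}²Θ̂ + (σ² + U)Θ̂ = 0` there. -/
theorem bardeenPress_iff_schroedinger_form
    (s ℓ : ℤ) (hsl : |s| ≤ ℓ) (σ : ℂ) (Ψ : ℝ → ℂ)
    (hΨ1 : ∀ ρ ∈ Set.Ioi (1:ℝ), DifferentiableAt ℝ Ψ ρ)
    (hΨ2 : ∀ ρ ∈ Set.Ioi (1:ℝ), DifferentiableAt ℝ (deriv Ψ) ρ) :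
    (∀ ρ ∈ Set.Ioi (1:ℝ),
        -(Dstar (Dstar Ψ) ρ) + (2*(s:ℂ)*((ρ:ℂ) - 1/2)/(ρ:ℂ)^2) * Dstar Ψ ρ +
          (2*(s:ℂ)*σ*((ρ:ℂ) - 3/2)/(ρ:ℂ)^2) * Ψ ρ + Vpot s ℓ ρ * Ψ ρ +
          σ^2 * Ψ ρ = 0) ↔
      (∀ ρ ∈ Set.Ioi (1:ℝ),
        -(Dstar (Dstar (Theta s Ψ)) ρ) + (σ^2 + Upot s ℓ σ ρ) * Theta s Ψ ρ = 0) :=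
  bardeenPress_iff_schroedinger_form_general s ℓ σ Ψ hΨ1 hΨ2
end
end

section
/- Fix a spin weight s∈ℤ and an integer ℓ≥|s|. Define a real sequence (aₙ) by a₀=1 and a_{n+1} = ((ℓ+n+1)(ℓ+n+s+1) / ((n+1)(2ℓ+n+2))) aₙ for n≥0. Then: (i) the power series Σ_{n≥0} aₙ xⁿ has radius of convergence 1, so that f(ρ) = Σ_{n=0}^{∞} aₙ ρ^{−(ℓ−s)−n} converges for every real ρ>1; and (ii) f is twice differentiable on (1,∞) and satisfies the σ=0 confluent (hypergeometric-type) equation f''(ρ) + [−(3s+1)/ρ + (1+s)/(ρ−1)] f'(ρ) + [(s+1)(2s+1)/ρ² − ((s+1)²+ℓ(ℓ+1))/(ρ(ρ−1))] f(ρ) = 0 on (1,∞). -/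
noncomputable section

/-- The Frobenius-type solution at infinity of the `σ = 0` confluent Heun
normal form: `f(ρ) = Σ_{n=0}^∞ aₙ ρ^{−(ℓ−s)−n}`. -/
def frobeniusSol (s ℓ : ℤ) (a : ℕ → ℝ) (ρ : ℝ) : ℝ :=
  ∑' n : ℕ, a n * ρ ^ (-(ℓ - s) - (n:ℤ))

/-!
Since `aₙ₊₁ / aₙ → 1`, the ratio test gives radius of convergence `1` for `Σ aₙ xⁿ`, and this
survives multiplying `aₙ` by polynomials in `n`. Hence the series `Σ aₙ ρ^{s-ℓ-n}` and its
termwise derivatives are dominated by convergent series on `ρ > 1`, so `f` may be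
differentiated termwise twice. After multiplying the equation by `ρ²(ρ-1)`, the `n`-th term
contributes `uₙ - wₙ` with `uₙ = n(n+2ℓ+1) aₙ ρ^{s-ℓ+1-n}` and
`wₙ = (n+ℓ+1)(n+ℓ+s+1) aₙ ρ^{s-ℓ-n}`; the recurrence says exactly `uₙ₊₁ = wₙ`, so the sum
telescopes to `u₀ = 0`.
-/

open Filter Topology Set

theorem tendsto_natCast_add_div_natCast_add (c d : ℝ) :
    Tendsto (fun n : ℕ => ((n : ℝ) + c) / ((n : ℝ) + d)) atTop (𝓝 1) := by
  simpa [add_comm] using tendsto_add_mul_div_add_mul_atTop_nhds c d (1 : ℝ) one_ne_zero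

def RatioTendstoOne (b : ℕ → ℝ) : Prop :=
  (∀ᶠ n in atTop, b n ≠ 0) ∧ Tendsto (fun n => ‖b (n + 1)‖ / ‖b n‖) atTop (𝓝 1)

theorem ratioTendstoOne_natCast_add (c : ℝ) : RatioTendstoOne (fun n => (n : ℝ) + c) := by
  refine ⟨?_, ?_⟩
  · exact ((tendsto_atTop_add_const_right _ c tendsto_natCast_atTop_atTop).eventually_gt_atTop
      0).mono fun n hn => hn.ne'
  · have h := (tendsto_natCast_add_div_natCast_add (c + 1) c).norm
    rw [norm_one] at h
    refine h.congr fun n => ?_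
    simp only [norm_div, Nat.cast_add_one, add_right_comm _ (1 : ℝ), add_assoc]

namespace RatioTendstoOne

variable {b p : ℕ → ℝ}

theorem mul (hp : RatioTendstoOne p) (hb : RatioTendstoOne b) :
    RatioTendstoOne (fun n => p n * b n) := by
  refine ⟨hp.1.and hb.1 |>.mono fun n hn => mul_ne_zero hn.1 hn.2, ?_⟩
  simpa only [norm_mul, mul_div_mul_comm, mul_one] using hp.2.mul hb.2

theorem neg (hb : RatioTendstoOne b) : RatioTendstoOne (fun n => -b n) := by
  simpa only [RatioTendstoOne, neg_ne_zero, norm_neg] using hb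

theorem const_sub_natCast_mul (hb : RatioTendstoOne b) (c : ℝ) :
    RatioTendstoOne (fun n => (c - n) * b n) := by
  convert ((ratioTendstoOne_natCast_add (-c)).mul hb).neg using 2 with n
  ring

theorem of_succ_eq_mul {R : ℕ → ℝ} (hb0 : b 0 ≠ 0) (hR : ∀ n, R n ≠ 0)
    (hrec : ∀ n, b (n + 1) = R n * b n) (hlim : Tendsto R atTop (𝓝 1)) :
    RatioTendstoOne b := by
  have hb : ∀ n, b n ≠ 0 := fun n => by
    induction n with
    | zero => exact hb0
    | succ n ih => rw [hrec]; exact mul_ne_zero (hR n) ih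
  refine ⟨Eventually.of_forall hb, ?_⟩
  simpa only [hrec, norm_mul, mul_div_cancel_right₀ _ (norm_ne_zero_iff.2 (hb _)), norm_one]
    using hlim.norm

theorem tendsto_norm_mul_pow_ratio (hb : RatioTendstoOne b) {x : ℝ} (hx : x ≠ 0) :
    Tendsto (fun n => ‖b (n + 1) * x ^ (n + 1)‖ / ‖b n * x ^ n‖) atTop (𝓝 ‖x‖) := by
  have h := hb.2.mul_const ‖x‖
  rw [one_mul] at h
  refine h.congr fun n => ?_
  rw [norm_mul, norm_mul, mul_div_mul_comm, norm_pow, norm_pow, pow_succ,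
    mul_div_cancel_left₀ _ (pow_ne_zero n (norm_ne_zero_iff.2 hx))]

theorem summable_mul_pow (hb : RatioTendstoOne b) {x : ℝ} (hx : |x| < 1) :
    Summable (fun n => b n * x ^ n) := by
  rcases eq_or_ne x 0 with rfl | hx0
  · exact summable_of_ne_finset_zero (s := {0}) fun n hn => by simp_all
  exact summable_of_ratio_test_tendsto_lt_one hx
    (hb.1.mono fun n hn => mul_ne_zero hn (pow_ne_zero n hx0)) (hb.tendsto_norm_mul_pow_ratio hx0)

theorem not_summable_mul_pow (hb : RatioTendstoOne b) {x : ℝ} (hx : 1 < |x|) :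
    ¬ Summable (fun n => b n * x ^ n) := by
  have hx0 : x ≠ 0 := by rintro rfl; norm_num at hx
  exact not_summable_of_ratio_test_tendsto_gt_one hx (hb.tendsto_norm_mul_pow_ratio hx0)

theorem summable_mul_zpow (hb : RatioTendstoOne b) (m : ℤ) {ρ : ℝ} (hρ : 1 < ρ) :
    Summable (fun n : ℕ => b n * ρ ^ (m - (n : ℤ))) := by
  have hρ0 : ρ ≠ 0 := by positivity
  have hx : |ρ⁻¹| < 1 := by
    rw [abs_inv, abs_of_pos (by positivity)]
    exact inv_lt_one_of_one_lt₀ hρ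
  refine ((hb.summable_mul_pow hx).mul_left (ρ ^ m)).congr fun n => ?_
  rw [zpow_sub₀ hρ0, zpow_natCast, inv_pow]
  ring

end RatioTendstoOne

theorem zpow_le_zpow_add_zpow {r y R : ℝ} (hr : 0 < r) (hry : r ≤ y) (hyR : y ≤ R) (k : ℤ) :
    y ^ k ≤ r ^ k + R ^ k := by
  have hy : 0 < y := hr.trans_le hry
  rcases le_total 0 k with hk | hk
  · linarith [zpow_le_zpow_left₀ hk hy.le hyR, zpow_pos hr k]
  · have h := zpow_le_zpow_left₀ (neg_nonneg.2 hk) (inv_nonneg.2 hy.le) (inv_anti₀ hr hry)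
    rw [inv_zpow', inv_zpow', neg_neg] at h
    linarith [zpow_pos (hr.trans_le (hry.trans hyR)) k]

def zpowSeries (b : ℕ → ℝ) (m : ℤ) (ρ : ℝ) : ℝ :=
  ∑' n : ℕ, b n * ρ ^ (m - (n : ℤ))

def derivCoeff (m : ℤ) (b : ℕ → ℝ) (n : ℕ) : ℝ :=
  ((m : ℝ) - n) * b n

section TermwiseDerivative

variable {b : ℕ → ℝ}

theorem ratioTendstoOne_derivCoeff (hb : RatioTendstoOne b) (m : ℤ) :
    RatioTendstoOne (derivCoeff m b) :=
  hb.const_sub_natCast_mul m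

theorem RatioTendstoOne.hasDerivAt_zpowSeries (hb : RatioTendstoOne b) (m : ℤ) {ρ : ℝ}
    (hρ : 1 < ρ) : HasDerivAt (zpowSeries b m) (zpowSeries (derivCoeff m b) (m - 1) ρ) ρ := by
  obtain ⟨r, hr, hrρ⟩ := exists_between hρ
  have hr0 : 0 < r := zero_lt_one.trans hr
  have hρI : ρ ∈ Ioo r (ρ + 1) := ⟨hrρ, lt_add_one ρ⟩
  have hb' := ratioTendstoOne_derivCoeff hb m
  have hbound : Summable (fun n => ‖derivCoeff m b n * r ^ (m - 1 - (n : ℤ))‖ +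
      ‖derivCoeff m b n * (ρ + 1) ^ (m - 1 - (n : ℤ))‖) :=
    (hb'.summable_mul_zpow _ hr).norm.add (hb'.summable_mul_zpow _ (hρ.trans hρI.2)).norm
  refine hasDerivAt_tsum_of_isPreconnected (g := fun n y => b n * y ^ (m - (n : ℤ)))
    (g' := fun n y => derivCoeff m b n * y ^ (m - 1 - (n : ℤ))) hbound isOpen_Ioo
    isPreconnected_Ioo (fun n y hy => ?_) (fun n y hy => ?_) hρI (hb.summable_mul_zpow m hρ) hρI
  · refine ((hasDerivAt_zpow (m - n) y (Or.inl (hr0.trans hy.1).ne')).const_mul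
      (b n)).congr_deriv ?_
    rw [derivCoeff, sub_right_comm m 1]
    push_cast
    ring
  · have hy0 : 0 < y := hr0.trans hy.1
    simp only [norm_mul, Real.norm_eq_abs, abs_of_pos (zpow_pos hy0 _),
      abs_of_pos (zpow_pos hr0 _), abs_of_pos (zpow_pos (hy0.trans hy.2) _), ← mul_add]
    exact mul_le_mul_of_nonneg_left (zpow_le_zpow_add_zpow hr0 hy.1.le hy.2.le _) (abs_nonneg _)

theorem RatioTendstoOne.eventuallyEq_deriv_zpowSeries (hb : RatioTendstoOne b) (m : ℤ) {ρ : ℝ}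
    (hρ : 1 < ρ) : deriv (zpowSeries b m) =ᶠ[𝓝 ρ] zpowSeries (derivCoeff m b) (m - 1) :=
  eventually_of_mem (Ioi_mem_nhds hρ) fun _ hy => (hb.hasDerivAt_zpowSeries m hy).deriv

theorem RatioTendstoOne.hasDerivAt_deriv_zpowSeries (hb : RatioTendstoOne b) (m : ℤ) {ρ : ℝ}
    (hρ : 1 < ρ) :
    HasDerivAt (deriv (zpowSeries b m))
      (zpowSeries (derivCoeff (m - 1) (derivCoeff m b)) (m - 1 - 1) ρ) ρ :=
  ((ratioTendstoOne_derivCoeff hb m).hasDerivAt_zpowSeries (m - 1) hρ).congr_of_eventuallyEq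
    (hb.eventuallyEq_deriv_zpowSeries m hρ)

end TermwiseDerivative

def frobeniusRatio (s ℓ : ℤ) (n : ℕ) : ℝ :=
  ((ℓ : ℝ) + n + 1) * ((ℓ : ℝ) + n + s + 1) / (((n : ℝ) + 1) * (2 * (ℓ : ℝ) + n + 2))

theorem frobeniusRatio_pos {s ℓ : ℤ} (hsl : |s| ≤ ℓ) (n : ℕ) : 0 < frobeniusRatio s ℓ n := by
  obtain ⟨h₁, h₂⟩ := abs_le.1 hsl
  have h₁' : -(ℓ : ℝ) ≤ s := by exact_mod_cast h₁
  have h₂' : (s : ℝ) ≤ ℓ := by exact_mod_cast h₂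
  have hn : (0 : ℝ) ≤ n := n.cast_nonneg
  unfold frobeniusRatio
  apply div_pos <;> apply mul_pos <;> linarith

theorem tendsto_frobeniusRatio (s ℓ : ℤ) : Tendsto (frobeniusRatio s ℓ) atTop (𝓝 1) := by
  have h := (tendsto_natCast_add_div_natCast_add (ℓ + 1) 1).mul
    (tendsto_natCast_add_div_natCast_add (ℓ + s + 1) (2 * ℓ + 2))
  rw [mul_one] at h
  refine h.congr fun n => ?_
  rw [frobeniusRatio, div_mul_div_comm]
  ring_nf

theorem tsum_sub_eq_zero_of_succ_eq {G : Type*} [AddCommGroup G] [TopologicalSpace G]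
    [IsTopologicalAddGroup G] [T2Space G] {u w : ℕ → G} (hw : Summable w) (hu0 : u 0 = 0)
    (h : ∀ n, u (n + 1) = w n) : ∑' n, (u n - w n) = 0 := by
  have hu : Summable u := (summable_nat_add_iff 1).1 (by simpa only [h] using hw)
  rw [hu.tsum_sub hw, hu.tsum_eq_zero_add, hu0, tsum_congr h, zero_add, sub_self]

theorem frobenius_ode_summand {s ℓ : ℤ} {ρ : ℝ} (hρ : 1 < ρ) (c : ℝ) (n : ℕ) :
    ((((-(ℓ - s) - 1 : ℤ) : ℝ) - n) * ((((-(ℓ - s) : ℤ) : ℝ) - n) * c)) *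
        ρ ^ (-(ℓ - s) - 1 - 1 - (n : ℤ)) +
      (-(3*(s:ℝ)+1)/ρ + (1+(s:ℝ))/(ρ-1)) *
        (((((-(ℓ - s) : ℤ) : ℝ) - n) * c) * ρ ^ (-(ℓ - s) - 1 - (n : ℤ))) +
      (((s:ℝ)+1)*(2*(s:ℝ)+1)/ρ^2 - (((s:ℝ)+1)^2 + (ℓ:ℝ)*((ℓ:ℝ)+1))/(ρ*(ρ-1))) *
        (c * ρ ^ (-(ℓ - s) - (n : ℤ))) =
    (ρ ^ 2 * (ρ - 1))⁻¹ * ((n : ℝ) * (n + (2 * ℓ + 1)) * c * ρ ^ (-(ℓ - s) + 1 - (n : ℤ)) -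
      ((n : ℝ) + (ℓ + 1)) * (((n : ℝ) + (ℓ + s + 1)) * c) * ρ ^ (-(ℓ - s) - (n : ℤ))) := by
  have hρ0 : ρ ≠ 0 := by positivity
  have hρ1 : ρ - 1 ≠ 0 := sub_ne_zero.2 hρ.ne'
  rw [show -(ℓ - s) - 1 - 1 - (n : ℤ) = -(ℓ - s) - n - 2 by ring, zpow_sub₀ hρ0,
    sub_right_comm _ 1, zpow_sub_one₀ hρ0, add_sub_right_comm, zpow_add_one₀ hρ0]
  generalize ρ ^ (-(ℓ - s) - (n : ℤ)) = P
  push_cast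
  field_simp
  ring

theorem zpowSeries_frobenius_ode {s ℓ : ℤ} (hℓ : 0 ≤ ℓ) {a : ℕ → ℝ} (hb : RatioTendstoOne a)
    (harec : ∀ n, a (n + 1) = frobeniusRatio s ℓ n * a n) {ρ : ℝ} (hρ : 1 < ρ) :
    zpowSeries (derivCoeff (-(ℓ - s) - 1) (derivCoeff (-(ℓ - s)) a)) (-(ℓ - s) - 1 - 1) ρ +
      (-(3*(s:ℝ)+1)/ρ + (1+(s:ℝ))/(ρ-1)) * zpowSeries (derivCoeff (-(ℓ - s)) a) (-(ℓ - s) - 1) ρ +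
      (((s:ℝ)+1)*(2*(s:ℝ)+1)/ρ^2 - (((s:ℝ)+1)^2 + (ℓ:ℝ)*((ℓ:ℝ)+1))/(ρ*(ρ-1))) *
        zpowSeries a (-(ℓ - s)) ρ = 0 := by
  set m : ℤ := -(ℓ - s)
  set c₁ : ℝ := -(3*(s:ℝ)+1)/ρ + (1+(s:ℝ))/(ρ-1)
  set c₀ : ℝ := ((s:ℝ)+1)*(2*(s:ℝ)+1)/ρ^2 - (((s:ℝ)+1)^2 + (ℓ:ℝ)*((ℓ:ℝ)+1))/(ρ*(ρ-1))
  set u : ℕ → ℝ := fun n => (n : ℝ) * (n + (2 * ℓ + 1)) * a n * ρ ^ (m + 1 - (n : ℤ))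
  set w : ℕ → ℝ := fun n => ((n : ℝ) + (ℓ + 1)) * (((n : ℝ) + (ℓ + s + 1)) * a n) *
    ρ ^ (m - (n : ℤ))
  have hw : Summable w := ((ratioTendstoOne_natCast_add _).mul
    ((ratioTendstoOne_natCast_add _).mul hb)).summable_mul_zpow m hρ
  have hu_succ : ∀ n, u (n + 1) = w n := fun n => by
    have hden : ((n : ℝ) + 1) * (2 * ℓ + n + 2) ≠ 0 := by
      have : (0 : ℝ) ≤ ℓ := by exact_mod_cast hℓ
      positivity
    simp only [u, w, harec, frobeniusRatio]
    rw [show m + 1 - ((n + 1 : ℕ) : ℤ) = m - n by push_cast; ring]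
    field_simp
    push_cast
    ring
  have hb₁ := ratioTendstoOne_derivCoeff hb m
  have h₂ := (ratioTendstoOne_derivCoeff hb₁ (m - 1)).summable_mul_zpow (m - 1 - 1) hρ
  have h₁ := (hb₁.summable_mul_zpow (m - 1) hρ).mul_left c₁
  have h₀ := (hb.summable_mul_zpow m hρ).mul_left c₀
  calc _ = ∑' n, (derivCoeff (m - 1) (derivCoeff m a) n * ρ ^ (m - 1 - 1 - (n : ℤ)) +
        c₁ * (derivCoeff m a n * ρ ^ (m - 1 - (n : ℤ))) + c₀ * (a n * ρ ^ (m - (n : ℤ)))) := by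
        rw [zpowSeries, zpowSeries, zpowSeries, ← tsum_mul_left, ← tsum_mul_left,
          ← h₂.tsum_add h₁, ← (h₂.add h₁).tsum_add h₀]
    _ = (ρ ^ 2 * (ρ - 1))⁻¹ * ∑' n, (u n - w n) := by
        rw [← tsum_mul_left]
        exact tsum_congr fun n => frobenius_ode_summand hρ (a n) n
    _ = 0 := by
        rw [tsum_sub_eq_zero_of_succ_eq hw (by simp [u]) hu_succ, mul_zero]

theorem frobeniusSol_eq_zpowSeries (s ℓ : ℤ) (a : ℕ → ℝ) :
    frobeniusSol s ℓ a = zpowSeries a (-(ℓ - s)) := rfl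

/-- (i) The power series `Σ aₙxⁿ` built from the recursion
`a₀ = 1`, `a_{n+1} = ((ℓ+n+1)(ℓ+n+s+1)/((n+1)(2ℓ+n+2)))aₙ` has radius of
convergence `1` (it converges for `|x| < 1` and diverges for `|x| > 1`), so
`f(ρ) = Σ aₙ ρ^{−(ℓ−s)−n}` converges for every `ρ > 1`; and (ii) `f` is twice
differentiable on `(1,∞)` and satisfies the `σ = 0` confluent
(hypergeometric-type) equation there (eqs. B.6–B.7). -/
theorem frobenius_series_solution
    (s ℓ : ℤ) (hsl : |s| ≤ ℓ) (a : ℕ → ℝ) (ha0 : a 0 = 1)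
    (harec : ∀ n : ℕ,
      a (n+1) = (((ℓ:ℝ)+(n:ℝ)+1)*((ℓ:ℝ)+(n:ℝ)+(s:ℝ)+1) /
        (((n:ℝ)+1)*(2*(ℓ:ℝ)+(n:ℝ)+2))) * a n) :
    (∀ x : ℝ, |x| < 1 → Summable (fun n : ℕ => a n * x ^ n)) ∧
    (∀ x : ℝ, 1 < |x| → ¬ Summable (fun n : ℕ => a n * x ^ n)) ∧
    (∀ ρ ∈ Set.Ioi (1:ℝ), Summable (fun n : ℕ => a n * ρ ^ (-(ℓ - s) - (n:ℤ)))) ∧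
    (∀ ρ ∈ Set.Ioi (1:ℝ), DifferentiableAt ℝ (frobeniusSol s ℓ a) ρ ∧
      DifferentiableAt ℝ (deriv (frobeniusSol s ℓ a)) ρ) ∧
    (∀ ρ ∈ Set.Ioi (1:ℝ),
      deriv (deriv (frobeniusSol s ℓ a)) ρ +
        (-(3*(s:ℝ)+1)/ρ + (1+(s:ℝ))/(ρ-1)) * deriv (frobeniusSol s ℓ a) ρ +
        (((s:ℝ)+1)*(2*(s:ℝ)+1)/ρ^2 -
          (((s:ℝ)+1)^2 + (ℓ:ℝ)*((ℓ:ℝ)+1))/(ρ*(ρ-1))) * frobeniusSol s ℓ a ρ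
        = 0) := by
  have hb : RatioTendstoOne a := .of_succ_eq_mul (by simp [ha0])
    (fun n => (frobeniusRatio_pos hsl n).ne') harec (tendsto_frobeniusRatio s ℓ)
  rw [frobeniusSol_eq_zpowSeries]
  refine ⟨fun _ => hb.summable_mul_pow, fun _ => hb.not_summable_mul_pow,
    fun _ hρ => hb.summable_mul_zpow _ hρ,
    fun _ hρ => ⟨(hb.hasDerivAt_zpowSeries _ hρ).differentiableAt,
      (hb.hasDerivAt_deriv_zpowSeries _ hρ).differentiableAt⟩, fun ρ hρ => ?_⟩
  rw [(hb.hasDerivAt_deriv_zpowSeries _ hρ).deriv, (hb.hasDerivAt_zpowSeries _ hρ).deriv]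
  exact zpowSeries_frobenius_ode ((abs_nonneg s).trans hsl) hb harec hρ
end
end
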